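/- On 𝔤₂₄ with the pseudo-Kähler structure of the previous statement, the curvature tensor of the associated metric g = ω∘J has, up to symmetries, only the nonzero components R¹²₂⁶ = −ψ₁₁², R¹²₁⁶ = −(1+ψ₁₁²)ψ₁₁/ψ₁₂, R¹²₂⁵ = −ψ₁₂ψ₁₁, R¹²₁⁵ = −ψ₁₁², and after lowering the index there is exactly one nonzero component R(e₁,e₂,e₁,e₂) = ψ₁₁. -/

import Mathlib

noncomputable section

/-- The underlying space ℝ⁶ of 𝔤₂₄ = 𝔥₃ × 𝔥₃. -/
abbrev V24 : Type := Fin 6 → ℝ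

/-- Standard basis vectors e₁,…,e₆ (0-indexed). -/
def e24 (i : Fin 6) : V24 := Pi.single i 1

/-- Bracket of 𝔤₂₄: [e₁,e₄] = e₆, [e₂,e₃] = e₅. -/
def br24 (X Y : V24) : V24 :=
  ![0, 0, 0, 0, X 1 * Y 2 - X 2 * Y 1, X 0 * Y 3 - X 3 * Y 0]

/-- ω = e¹∧e⁶ + e²∧e⁵ + e³∧e⁴. -/
def om24 (X Y : V24) : ℝ :=
  (X 0 * Y 5 - X 5 * Y 0) + (X 1 * Y 4 - X 4 * Y 1) + (X 2 * Y 3 - X 3 * Y 2)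

/-- The complex structure J on 𝔤₂₄ with parameters ψ₁₁ ≠ 0, ψ₁₂ ≠ 0. -/
def J24 (p q : ℝ) (X : V24) : V24 :=
  ![p * X 0 + q * X 1,
    -((1 + p ^ 2) / q) * X 0 - p * X 1,
    ((p ^ 2 - 1) / (2 * p)) * X 2 + (q ^ 2 / (2 * p)) * X 3,
    -((2 * p ^ 2 + p ^ 4 + 1) / (2 * p * q ^ 2)) * X 2 - ((p ^ 2 - 1) / (2 * p)) * X 3,
    p * X 4 - q * X 5,
    ((1 + p ^ 2) / q) * X 4 - p * X 5]

/-- Associated metric g(X,Y) = ω(X, JY). -/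
def g24 (p q : ℝ) (X Y : V24) : ℝ := om24 X (J24 p q Y)

/-!
The Koszul formula determines `∇` because `g` is nondegenerate, so `∇` is the explicit bilinear
map `nabla24` obtained by solving it on the basis. Its curvature is supported on the plane
`span {e₁, e₂}`: `R(X,Y)Z` only has `e₅`, `e₆`-components, and the lowered tensor is
`p (e¹ ∧ e²) ⊗ (e¹ ∧ e²)`.
-/

lemma g24_sub_left (p q : ℝ) (X Y Z : V24) :
    g24 p q (X - Y) Z = g24 p q X Z - g24 p q Y Z := by
  simp only [g24, om24, Pi.sub_apply]
  ring

lemma vec_eq_g24_pairings (p q : ℝ) (hp : p ≠ 0) (hq : q ≠ 0) (v : V24) :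
    v = ![q * g24 p q v (e24 4) + p * g24 p q v (e24 5),
      -p * g24 p q v (e24 4) - (1 + p ^ 2) / q * g24 p q v (e24 5),
      -(q ^ 2 / (2 * p)) * g24 p q v (e24 2) - (1 - p ^ 2) / (2 * p) * g24 p q v (e24 3),
      -((1 - p ^ 2) / (2 * p)) * g24 p q v (e24 2)
        - (1 + p ^ 2) ^ 2 / (2 * p * q ^ 2) * g24 p q v (e24 3),
      q * g24 p q v (e24 0) - p * g24 p q v (e24 1),
      p * g24 p q v (e24 0) - (1 + p ^ 2) / q * g24 p q v (e24 1)] := by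
  funext i
  fin_cases i <;> simp [g24, om24, J24, e24] <;> field_simp <;> ring

lemma eq_zero_of_g24_basis_eq_zero (p q : ℝ) (hp : p ≠ 0) (hq : q ≠ 0) (v : V24)
    (h : ∀ k, g24 p q v (e24 k) = 0) : v = 0 := by
  rw [vec_eq_g24_pairings p q hp hq v]
  simp [h]

def nabla24 (p q : ℝ) (X Y : V24) : V24 :=
  ![0, 0,
    (p ^ 2 - 1) / 2 * (X 0 * Y 0) + p * q / 2 * (X 0 * Y 1 + X 1 * Y 0) + q ^ 2 / 2 * (X 1 * Y 1),
    -((1 + p ^ 2) ^ 2 / (2 * q ^ 2)) * (X 0 * Y 0)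
      - p * (1 + p ^ 2) / (2 * q) * (X 0 * Y 1 + X 1 * Y 0) + (1 - p ^ 2) / 2 * (X 1 * Y 1),
    -(p * (1 + p ^ 2) / (2 * q)) * (X 0 * Y 2 + X 2 * Y 0) + (1 - p ^ 2) / 2 * (X 1 * Y 2)
      - (1 + p ^ 2) / 2 * (X 2 * Y 1) - p * q / 2 * (X 0 * Y 3 + X 3 * Y 0)
      - q ^ 2 / 2 * (X 1 * Y 3 + X 3 * Y 1),
    -((1 + p ^ 2) ^ 2 / (2 * q ^ 2)) * (X 0 * Y 2 + X 2 * Y 0)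
      - p * (1 + p ^ 2) / (2 * q) * (X 1 * Y 2 + X 2 * Y 1) + (1 - p ^ 2) / 2 * (X 0 * Y 3)
      - (1 + p ^ 2) / 2 * (X 3 * Y 0) - p * q / 2 * (X 1 * Y 3 + X 3 * Y 1)]

lemma nabla24_koszul (p q : ℝ) (hp : p ≠ 0) (hq : q ≠ 0) (X Y Z : V24) :
    2 * g24 p q (nabla24 p q X Y) Z
      = g24 p q (br24 X Y) Z + g24 p q (br24 Z X) Y + g24 p q X (br24 Z Y) := by
  simp [g24, om24, J24, br24, nabla24]
  field_simp
  ring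

lemma eq_nabla24_of_koszul (p q : ℝ) (hp : p ≠ 0) (hq : q ≠ 0) (nabla : V24 → V24 → V24)
    (hkoszul : ∀ X Y Z : V24,
      2 * g24 p q (nabla X Y) Z
        = g24 p q (br24 X Y) Z + g24 p q (br24 Z X) Y + g24 p q X (br24 Z Y)) :
    nabla = nabla24 p q := by
  funext X Y
  refine sub_eq_zero.mp (eq_zero_of_g24_basis_eq_zero p q hp hq _ fun k => ?_)
  have h := hkoszul X Y (e24 k)
  have h24 := nabla24_koszul p q hp hq X Y (e24 k)
  rw [g24_sub_left]
  linarith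

def curv24 (p q : ℝ) (X Y Z : V24) : V24 :=
  nabla24 p q X (nabla24 p q Y Z) - nabla24 p q Y (nabla24 p q X Z)
    - nabla24 p q (br24 X Y) Z

lemma curv24_e0_e1 (p q : ℝ) (hq : q ≠ 0) (Z : V24) :
    curv24 p q (e24 0) (e24 1) Z
      = ![0, 0, 0, 0, -p ^ 2 * Z 0 - q * p * Z 1, -(1 + p ^ 2) * p / q * Z 0 - p ^ 2 * Z 1] := by
  funext i
  fin_cases i <;> simp [curv24, nabla24, br24, e24] <;> field_simp <;> ring

lemma g24_curv24 (p q : ℝ) (hq : q ≠ 0) (X Y Z W : V24) :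
    g24 p q (curv24 p q X Y Z) W
      = p * (X 0 * Y 1 - X 1 * Y 0) * (Z 0 * W 1 - Z 1 * W 0) := by
  simp [g24, om24, J24, curv24, nabla24, br24]
  field_simp
  ring

lemma e24_minor01_eq_zero {i j : Fin 6} (h : ({i, j} : Finset (Fin 6)) ≠ {0, 1}) :
    e24 i 0 * e24 j 1 - e24 i 1 * e24 j 0 = 0 := by
  fin_cases i <;> fin_cases j <;> first | exact absurd (by decide) h | simp [e24]

/-- the curvature of the associated metric on 𝔤₂₄ has
R¹²₂⁶ = −ψ₁₁², R¹²₁⁶ = −(1+ψ₁₁²)ψ₁₁/ψ₁₂, R¹²₂⁵ = −ψ₁₂ψ₁₁, R¹²₁⁵ = −ψ₁₁²,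
and after lowering the index, R(e₁,e₂,e₁,e₂) = ψ₁₁ is the only nonzero component. -/
theorem g24_curvature (p q : ℝ) (hp : p ≠ 0) (hq : q ≠ 0)
    (nabla : V24 → V24 → V24)
    (hkoszul : ∀ X Y Z : V24,
      2 * g24 p q (nabla X Y) Z
        = g24 p q (br24 X Y) Z + g24 p q (br24 Z X) Y + g24 p q X (br24 Z Y))
    (R : V24 → V24 → V24 → V24)
    (hR : ∀ X Y Z : V24,
      R X Y Z = nabla X (nabla Y Z) - nabla Y (nabla X Z) - nabla (br24 X Y) Z) :
    R (e24 0) (e24 1) (e24 1) 5 = -p ^ 2 ∧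
    R (e24 0) (e24 1) (e24 0) 5 = -(1 + p ^ 2) * p / q ∧
    R (e24 0) (e24 1) (e24 1) 4 = -q * p ∧
    R (e24 0) (e24 1) (e24 0) 4 = -p ^ 2 ∧
    g24 p q (R (e24 0) (e24 1) (e24 0)) (e24 1) = p ∧
    (∀ i j k l : Fin 6,
      ¬(({i, j} : Finset (Fin 6)) = {0, 1} ∧ ({k, l} : Finset (Fin 6)) = {0, 1}) →
      g24 p q (R (e24 i) (e24 j) (e24 k)) (e24 l) = 0) := by
  obtain rfl := eq_nabla24_of_koszul p q hp hq nabla hkoszul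
  obtain rfl : R = curv24 p q := by
    funext X Y Z
    exact hR X Y Z
  refine ⟨?_, ?_, ?_, ?_, ?_, fun i j k l hij => ?_⟩
  iterate 4 (rw [curv24_e0_e1 p q hq]; simp [e24])
  · simp [g24_curv24 p q hq, e24]
  · rw [g24_curv24 p q hq]
    rcases not_and_or.mp hij with h | h <;> simp [e24_minor01_eq_zero h]
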